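/- Let T be a bounded operator on a Hilbert space H that is generalized Drazin invertible with closed range, and T⁻ an inner inverse of T. Then the operator T² T⁻ is generalized Drazin invertible and its generalized Drazin inverse equals the GD1 inverse of T, i.e., (T² T⁻)^d = T^d T T⁻. -/

import Mathlib

/-!
Write `A = T² T⁻`, `X = T^d T T⁻`, `Q = T - T² T^d` and `P = T T⁻`, so that `P T = T` and
hence, as `T^d = T (T^d)²`, `P T^d = T^d`. The two algebraic identities of a generalized Drazin
inverse follow by cancelling `P` against `T` and `T^d`. For the third one, `A - A² X = Q P`
while `P Q = Q`; since `σ(Q P) \ {0} = σ(P Q) \ {0}`, the operator `A - A² X` has the spectral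
radius of `Q`, which is `0`.
-/

open Filter Topology

variable {H : Type*} [NormedAddCommGroup H] [InnerProductSpace ℂ H] [CompleteSpace H]

section SpectralRadius

variable {𝕜 A : Type*} [NormedField 𝕜] [Ring A] [Algebra 𝕜 A]

theorem spectralRadius_eq_iSup_diff_zero (a : A) :
    spectralRadius 𝕜 a = ⨆ k ∈ spectrum 𝕜 a \ {0}, (‖k‖₊ : ENNReal) := by
  refine le_antisymm (iSup₂_le fun k hk => ?_)
    (iSup₂_le fun k hk => le_iSup₂_of_le k hk.1 le_rfl)
  rcases eq_or_ne k 0 with rfl | hk0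
  · simp
  · exact le_iSup₂_of_le k ⟨hk, hk0⟩ le_rfl

theorem spectralRadius_mul_comm (a b : A) :
    spectralRadius 𝕜 (a * b) = spectralRadius 𝕜 (b * a) := by
  rw [spectralRadius_eq_iSup_diff_zero, spectralRadius_eq_iSup_diff_zero,
    spectrum.nonzero_mul_comm]

end SpectralRadius

section Monoid

variable {M : Type*} [Monoid M] {t td ti : M}

theorem mul_inner_inverse_mul_mul (hinner : t * ti * t = t) (x : M) :
    t * (ti * (t * x)) = t * x := by
  rw [← mul_assoc, ← mul_assoc, hinner]

theorem mul_inner_inverse_mul_gd (hinner : t * ti * t = t) (hd1 : td * t * td = td)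
    (hcomm : Commute t td) : t * ti * td = td :=
  calc t * ti * td = t * ti * (t * td * td) := by rw [hcomm.eq, hd1]
    _ = t * td * td := by simp only [← mul_assoc, hinner]
    _ = td := by rw [hcomm.eq, hd1]

theorem mul_inner_inverse_mul_gd_mul (hinner : t * ti * t = t) (hd1 : td * t * td = td)
    (hcomm : Commute t td) (x : M) : t * (ti * (td * x)) = td * x := by
  rw [← mul_assoc, ← mul_assoc, mul_inner_inverse_mul_gd hinner hd1 hcomm]

theorem gd_mul_gd_mul_mul (hd1 : td * t * td = td) (hcomm : Commute t td) (x : M) :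
    td * (td * (t * x)) = td * x := by
  rw [← mul_assoc, ← mul_assoc, mul_assoc td, ← hcomm.eq, ← mul_assoc, hd1]

theorem gd1_mul_sq_mul_gd1 (hinner : t * ti * t = t) (hd1 : td * t * td = td)
    (hcomm : Commute t td) :
    (td * t * ti) * (t ^ 2 * ti) * (td * t * ti) = td * t * ti := by
  simp only [pow_two, mul_assoc, mul_inner_inverse_mul_mul hinner,
    mul_inner_inverse_mul_gd_mul hinner hd1 hcomm, hcomm.left_comm,
    gd_mul_gd_mul_mul hd1 hcomm]

theorem sq_mul_commute_gd1 (hinner : t * ti * t = t) (hcomm : Commute t td) :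
    (t ^ 2 * ti) * (td * t * ti) = (td * t * ti) * (t ^ 2 * ti) :=
  calc (t ^ 2 * ti) * (td * t * ti) = (t ^ 2 * ti) * (t * td * ti) := by rw [hcomm.eq]
    _ = t * (t * (td * ti)) := by simp only [pow_two, mul_assoc, mul_inner_inverse_mul_mul hinner]
    _ = (td * t * ti) * (t ^ 2 * ti) := by
      simp only [pow_two, mul_assoc, mul_inner_inverse_mul_mul hinner, hcomm.left_comm]

end Monoid

section Ring

variable {R : Type*} [Ring R] {t td ti : R}

theorem sq_mul_sub_sq_sq_mul_gd1 (hinner : t * ti * t = t) (hcomm : Commute t td) :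
    t ^ 2 * ti - (t ^ 2 * ti) ^ 2 * (td * t * ti) = (t - t ^ 2 * td) * (t * ti) := by
  simp only [pow_two, mul_assoc, sub_mul, mul_inner_inverse_mul_mul hinner,
    hcomm.symm.left_comm]

theorem mul_inner_inverse_mul_sub_sq_mul (hinner : t * ti * t = t) :
    t * ti * (t - t ^ 2 * td) = t - t ^ 2 * td := by
  rw [mul_sub, pow_two, ← mul_assoc, ← mul_assoc, hinner]

end Ring

theorem stmt11_general (T Td Ti : H →L[ℂ] H)
    (hd1 : Td * T * Td = Td) (hd2 : T * Td = Td * T)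
    (hd3 : spectralRadius ℂ (T - T^2 * Td) = 0)
    (hinner : T * Ti * T = T) :
    (Td * T * Ti) * (T ^ 2 * Ti) * (Td * T * Ti) = Td * T * Ti ∧
    (T ^ 2 * Ti) * (Td * T * Ti) = (Td * T * Ti) * (T ^ 2 * Ti) ∧
    spectralRadius ℂ (T ^ 2 * Ti - (T ^ 2 * Ti) ^ 2 * (Td * T * Ti)) = 0 := by
  refine ⟨gd1_mul_sq_mul_gd1 hinner hd1 hd2, sq_mul_commute_gd1 hinner hd2, ?_⟩
  rw [sq_mul_sub_sq_sq_mul_gd1 hinner hd2, spectralRadius_mul_comm,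
    mul_inner_inverse_mul_sub_sq_mul hinner, hd3]

theorem stmt11 (T Td Ti : H →L[ℂ] H)
    (hclosed : IsClosed (Set.range T))
    (hd1 : Td * T * Td = Td) (hd2 : T * Td = Td * T)
    (hd3 : spectralRadius ℂ (T - T^2 * Td) = 0)
    (hinner : T * Ti * T = T) :
    (Td * T * Ti) * (T ^ 2 * Ti) * (Td * T * Ti) = Td * T * Ti ∧
    (T ^ 2 * Ti) * (Td * T * Ti) = (Td * T * Ti) * (T ^ 2 * Ti) ∧
    spectralRadius ℂ (T ^ 2 * Ti - (T ^ 2 * Ti) ^ 2 * (Td * T * Ti)) = 0 :=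
  stmt11_general T Td Ti hd1 hd2 hd3 hinner
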